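/- arXiv:2002.07453 — 3 statements merged into one kernel-verified Lean document; each statement's English description precedes it below -/
import Mathlib

section
/- For every n ∈ ℕ and every d ≥ 3, there exists an injective map Φ : 𝒫_{n,d} → 𝒫_{n(n+1),d−1} satisfying Φ(𝒥^lin_{n,d}) = 𝒥^lin_{n(n+1),d−1;n} ∩ Φ(𝒫_{n,d}) and Φ(𝒥_{n,d}) = 𝒥_{n(n+1),d−1;n} ∩ Φ(𝒫_{n,d}). -/
open MvPolynomial

/-- The Jacobian determinant of a polynomial system indexed by a finite type `ι`,
as a polynomial: `det (∂F_j/∂z_i)_{i,j}`. -/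
noncomputable def jacDet {ι : Type*} [Fintype ι] [DecidableEq ι]
    (F : ι → MvPolynomial ι ℂ) : MvPolynomial ι ℂ :=
  Matrix.det (Matrix.of fun i j => pderiv i (F j))

/-- `𝒫_{ι,d}`: polynomial systems `ℂ^ι → ℂ^ι` of total degree at most `d`. -/
def PolySys (ι : Type*) (d : ℕ) : Set (ι → MvPolynomial ι ℂ) :=
  {F | ∀ i, (F i).totalDegree ≤ d}

/-- `𝒥^lin`: systems in `𝒫` whose Jacobian determinant is a nonzero constant. -/
def JlinSet (ι : Type*) [Fintype ι] [DecidableEq ι] (d : ℕ) :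
    Set (ι → MvPolynomial ι ℂ) :=
  {F | F ∈ PolySys ι d ∧ ∃ c : ℂ, c ≠ 0 ∧ jacDet F = C c}

/-- `𝒥`: systems in `𝒫` invertible with polynomial inverse. -/
def JSet (ι : Type*) [Fintype ι] [DecidableEq ι] (d : ℕ) :
    Set (ι → MvPolynomial ι ℂ) :=
  {F | F ∈ PolySys ι d ∧ ∃ G : ι → MvPolynomial ι ℂ,
    (∀ i, bind₁ F (G i) = X i) ∧ (∀ i, bind₁ G (F i) = X i)}

/-- For a system `G` on variables split into blocks `α ⊕ β`, and a parameter
`z1 : ℂ^α`, the system `R(·; z1) := G₂(z1, ·)` in the variables `z2 : ℂ^β`. -/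
noncomputable def Rsys {α β : Type*}
    (G : (α ⊕ β) → MvPolynomial (α ⊕ β) ℂ) (z1 : α → ℂ) :
    β → MvPolynomial β ℂ :=
  fun j => aeval (Sum.elim (fun a => C (z1 a)) X) (G (Sum.inr j))

/-- `𝒥_{m,d;n'}` (with `ℂ^m = ℂ^α × ℂ^β`, first block `α`): systems `G ∈ 𝒫_{m,d}`
such that for every `u ∈ ℂ^α` there is a unique `z ∈ ℂ^m` with `G(z) = (u,0)`,
and the map `u ↦ z` is polynomial. -/
def JParamSet (α β : Type*) (d : ℕ) : Set ((α ⊕ β) → MvPolynomial (α ⊕ β) ℂ) :=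
  {G | G ∈ PolySys (α ⊕ β) d ∧
    ∃ Z : α ⊕ β → MvPolynomial α ℂ,
      ∀ u : α → ℂ,
        (∀ i, eval (fun i' => eval u (Z i')) (G i) = Sum.elim u (fun _ => 0) i) ∧
        (∀ z : α ⊕ β → ℂ,
          (∀ i, eval z (G i) = Sum.elim u (fun _ => 0) i) →
          z = fun i' => eval u (Z i'))}

/-- `𝒥^lin_{m,d;n'}` (with `ℂ^m = ℂ^α × ℂ^β`, first block `α`): systems
`G ∈ 𝒫_{m,d}` such that for every `z1 ∈ ℂ^α` the system `R(·; z1)` is invertible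
with polynomial inverse `S`, and `det J_G(z1, R⁻¹(0; z1)) = c` for a nonzero
constant `c` independent of `z1`. -/
def JlinParamSet (α β : Type*) [Fintype α] [DecidableEq α]
    [Fintype β] [DecidableEq β] (d : ℕ) :
    Set ((α ⊕ β) → MvPolynomial (α ⊕ β) ℂ) :=
  {G | G ∈ PolySys (α ⊕ β) d ∧
    ∃ c : ℂ, c ≠ 0 ∧
      ∀ z1 : α → ℂ,
        ∃ S : β → MvPolynomial β ℂ,
          (∀ j, bind₁ (Rsys G z1) (S j) = X j) ∧
          (∀ j, bind₁ S (Rsys G z1 j) = X j) ∧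
          eval (Sum.elim z1 fun j => eval (fun _ : β => (0 : ℂ)) (S j))
            (jacDet G) = c}

/-!
Write `y_{ij}` for new variables standing for `z_i z_j`. `Φ(F)` consists of `F` with one factor
`z_i z_j` of every monomial of degree `≥ 2` replaced by `y_{ij}` (which lowers the degree by one),
followed by the components `y_{ij} - z_i z_j`. The common zeros of the latter are exactly the
points `(z, z ⊗ z)`, where the first block of `Φ(F)` takes the value `F(z)`; so solving
`Φ(F) = (u, 0)` amounts to solving `F(z) = u`, and `R(·; z₁)` is the translation `y ↦ y - z₁ ⊗ z₁`.
In the Jacobian matrix of `Φ(F)` the block `∂(y - z ⊗ z)/∂y` is the identity, so its determinant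
is that of the Schur complement, which by the chain rule is `J_F(z)`.
-/
namespace Finsupp

variable {σ : Type*}

theorem exists_single_one_le {a : σ →₀ ℕ} (ha : a ≠ 0) : ∃ i, single i 1 ≤ a := by
  obtain ⟨i, hi⟩ := Finsupp.ne_iff.mp ha
  exact ⟨i, single_le_iff.mpr (Nat.one_le_iff_ne_zero.mpr hi)⟩

theorem exists_single_one_add_single_one_le {a : σ →₀ ℕ} (ha : 2 ≤ a.degree) :
    ∃ q : σ × σ, single q.1 1 + single q.2 1 ≤ a := by
  obtain ⟨i, hi⟩ := exists_single_one_le (a := a) (by rintro rfl; simp at ha)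
  have hdeg : (a - single i 1).degree + 1 = a.degree := by
    simpa using congrArg degree (tsub_add_cancel_of_le hi)
  obtain ⟨j, hj⟩ := exists_single_one_le (a := a - single i 1) (by
    rintro h
    rw [h, map_zero] at hdeg
    omega)
  exact ⟨(j, i), (le_tsub_iff_right hi).mp hj⟩

end Finsupp

namespace MvPolynomial

variable {R σ τ : Type*} [CommSemiring R]

theorem eval_bind₁ (z : τ → R) (g : σ → MvPolynomial τ R) (p : MvPolynomial σ R) :
    eval z (bind₁ g p) = eval (fun v => eval z (g v)) p :=
  (eval_assoc g z p).symm

theorem pderiv_bind₁ [Fintype σ] [DecidableEq σ] [DecidableEq τ]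
    (g : σ → MvPolynomial τ R) (k : τ) (p : MvPolynomial σ R) :
    pderiv k (bind₁ g p) = ∑ v, bind₁ g (pderiv v p) * pderiv k (g v) := by
  induction p using MvPolynomial.induction_on with
  | C a => simp
  | add p q hp hq => simp only [map_add, hp, hq, Finset.sum_add_distrib, add_mul]
  | mul_X p v hp =>
    simp only [map_mul, bind₁_X_right, Derivation.leibniz, smul_eq_mul, hp, pderiv_X,
      Pi.single_apply, apply_ite, mul_one, mul_zero, map_add, map_zero, add_mul, ite_mul, zero_mul,
      Finset.sum_add_distrib, Finset.sum_ite_eq, Finset.mem_univ, if_true, Finset.mul_sum,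
      mul_assoc]

end MvPolynomial

namespace QuadraticReduction

open Finsupp (single)

variable {R σ : Type*}

section CommSemiring

variable [CommSemiring R]

-- The variables `Sum.inl i` and `Sum.inr (i, j)` of `σ ⊕ σ × σ` stand for `z_i` and `y_{ij}`;
-- `aeval quadVars` substitutes `y_{ij} ↦ z_i z_j`.
noncomputable def quadVars : σ ⊕ σ × σ → MvPolynomial σ R :=
  Sum.elim X fun q => X q.1 * X q.2

@[simp]
theorem quadVars_inl (i : σ) : (quadVars (Sum.inl i) : MvPolynomial σ R) = X i := rfl

def quadPoint (z : σ → R) : σ ⊕ σ × σ → R :=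
  Sum.elim z fun q => z q.1 * z q.2

@[simp]
theorem quadPoint_inl (z : σ → R) (i : σ) : quadPoint z (Sum.inl i) = z i := rfl

@[simp]
theorem quadPoint_inr (z : σ → R) (q : σ × σ) : quadPoint z (Sum.inr q) = z q.1 * z q.2 := rfl

theorem eval_quadVars (z : σ → R) (v : σ ⊕ σ × σ) : eval z (quadVars v) = quadPoint z v := by
  cases v <;> simp [quadVars, quadPoint]

theorem eval_aeval_quadVars (z : σ → R) (p : MvPolynomial (σ ⊕ σ × σ) R) :
    eval z (aeval quadVars p) = eval (quadPoint z) p := by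
  simp only [aeval_eq_bind₁, eval_bind₁, eval_quadVars]

theorem aeval_quadVars_rename_inl (p : MvPolynomial σ R) :
    aeval quadVars (rename Sum.inl p) = p := by
  rw [aeval_rename]
  exact aeval_X_left_apply p

open Classical in
noncomputable def lowerMonomial (a : σ →₀ ℕ) : MvPolynomial (σ ⊕ σ × σ) R :=
  if h : ∃ q : σ × σ, single q.1 1 + single q.2 1 ≤ a then
    X (Sum.inr h.choose) *
      rename Sum.inl (monomial (a - (single h.choose.1 1 + single h.choose.2 1)) 1)
  else rename Sum.inl (monomial a 1)

theorem aeval_quadVars_lowerMonomial (a : σ →₀ ℕ) :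
    aeval quadVars (lowerMonomial a : MvPolynomial (σ ⊕ σ × σ) R) = monomial a (1 : R) := by
  unfold lowerMonomial
  split_ifs with h
  · rw [map_mul, aeval_quadVars_rename_inl (R := R), aeval_X]
    simp only [quadVars, Sum.elim_inr, X, monomial_mul, one_mul]
    rw [add_tsub_cancel_of_le h.choose_spec]
  · exact aeval_quadVars_rename_inl _

theorem totalDegree_lowerMonomial_le (a : σ →₀ ℕ) :
    (lowerMonomial a : MvPolynomial (σ ⊕ σ × σ) R).totalDegree ≤ max 1 (a.degree - 1) := by
  have hmon (b : σ →₀ ℕ) :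
      (rename (Sum.inl (β := σ × σ)) (monomial b (1 : R))).totalDegree ≤ b.degree :=
    (totalDegree_rename_le _ _).trans (totalDegree_monomial_le _ _)
  unfold lowerMonomial
  split_ifs with h
  · set s := single h.choose.1 1 + single h.choose.2 1
    have hX : (X (Sum.inr h.choose) : MvPolynomial (σ ⊕ σ × σ) R).totalDegree ≤ 1 :=
      (totalDegree_monomial_le _ _).trans (by simp)
    have hdeg : (a - s).degree + 2 = a.degree := by
      simpa [s] using congrArg Finsupp.degree (tsub_add_cancel_of_le h.choose_spec)
    grw [totalDegree_mul, hX, hmon]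
    omega
  · have : a.degree ≤ 1 := by
      contrapose! h
      exact Finsupp.exists_single_one_add_single_one_le h
    grw [hmon]
    omega

noncomputable def lowerDegree (p : MvPolynomial σ R) : MvPolynomial (σ ⊕ σ × σ) R :=
  ∑ a ∈ p.support, C (coeff a p) * lowerMonomial a

theorem aeval_quadVars_lowerDegree (p : MvPolynomial σ R) :
    aeval quadVars (lowerDegree p) = p := by
  simp only [lowerDegree, map_sum, map_mul, aeval_C, algebraMap_eq,
    aeval_quadVars_lowerMonomial, C_mul_monomial, mul_one]
  exact p.support_sum_monomial_coeff

theorem eval_quadPoint_lowerDegree (z : σ → R) (p : MvPolynomial σ R) :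
    eval (quadPoint z) (lowerDegree p) = eval z p := by
  rw [← eval_aeval_quadVars, aeval_quadVars_lowerDegree]

theorem totalDegree_lowerDegree_le (p : MvPolynomial σ R) :
    (lowerDegree p).totalDegree ≤ max 1 (p.totalDegree - 1) := by
  refine totalDegree_finsetSum_le fun a ha => ?_
  grw [totalDegree_mul, totalDegree_C, totalDegree_lowerMonomial_le,
    show a.degree ≤ p.totalDegree from le_totalDegree ha]
  omega

end CommSemiring

section CommRing

variable [CommRing R]

noncomputable def reduction (F : σ → MvPolynomial σ R) :
    σ ⊕ σ × σ → MvPolynomial (σ ⊕ σ × σ) R :=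
  Sum.elim (fun i => lowerDegree (F i))
    fun q => X (Sum.inr q) - X (Sum.inl q.1) * X (Sum.inl q.2)

theorem reduction_injective :
    Function.Injective (reduction (R := R) (σ := σ)) := by
  intro F F' h
  funext i
  simpa only [reduction, Sum.elim_inl, aeval_quadVars_lowerDegree] using
    congrArg (aeval (quadVars (R := R))) (congrFun h (Sum.inl i))

theorem eval_reduction_eq_sumElim_iff (F : σ → MvPolynomial σ R) (w : σ ⊕ σ × σ → R)
    (u : σ → R) :
    (∀ v, eval w (reduction F v) = Sum.elim u (fun _ => 0) v) ↔
      ∃ z, w = quadPoint z ∧ ∀ i, eval z (F i) = u i := by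
  constructor
  · intro h
    have hw : w = quadPoint (fun i => w (Sum.inl i)) := by
      funext v
      rcases v with i | q
      · rfl
      · simpa [reduction, sub_eq_zero] using h (Sum.inr q)
    refine ⟨_, hw, fun i => ?_⟩
    rw [← eval_quadPoint_lowerDegree, ← hw]
    exact h (Sum.inl i)
  · rintro ⟨z, rfl, hz⟩ (i | q)
    · simpa [reduction, eval_quadPoint_lowerDegree] using hz i
    · simp [reduction]

end CommRing

theorem reduction_mem_polySys {d : ℕ} (hd : 3 ≤ d) {F : σ → MvPolynomial σ ℂ}
    (hF : F ∈ PolySys σ d) : reduction F ∈ PolySys (σ ⊕ σ × σ) (d - 1)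
  | Sum.inl i => (totalDegree_lowerDegree_le (F i)).trans (by have := hF i; omega)
  | Sum.inr q => by
    simp only [reduction, Sum.elim_inr]
    grw [totalDegree_sub, totalDegree_mul, totalDegree_X, totalDegree_X, totalDegree_X]
    omega

theorem rsys_reduction (F : σ → MvPolynomial σ ℂ) (z₁ : σ → ℂ) (q : σ × σ) :
    Rsys (reduction F) z₁ q = X q - C (z₁ q.1 * z₁ q.2) := by
  simp [Rsys, reduction]

theorem eval_pderiv_inl_reduction_inr (F : σ → MvPolynomial σ ℂ) (z : σ → ℂ) (k : σ)
    (q : σ × σ) :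
    eval (quadPoint z) (pderiv (Sum.inl k) (reduction F (Sum.inr q))) =
      -eval z (pderiv k (quadVars (Sum.inr q))) := by
  have hrename : X (Sum.inl q.1) * X (Sum.inl q.2) =
      rename (Sum.inl (β := σ × σ)) (quadVars (R := ℂ) (Sum.inr q)) := by
    simp [quadVars]
  rw [reduction, Sum.elim_inr, map_sub, pderiv_X_of_ne Sum.inr_ne_inl, hrename,
    pderiv_rename Sum.inl_injective, zero_sub, map_neg, eval_rename]
  rfl

section Jacobian

variable [DecidableEq σ]

noncomputable abbrev jacobianAt {ι : Type*} (F : ι → MvPolynomial ι ℂ)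
    (z : ι → ℂ) : Matrix ι ι ℂ :=
  (Matrix.of fun i j => pderiv i (F j)).map (eval z)

theorem toBlocks₂₂_jacobianAt_reduction (F : σ → MvPolynomial σ ℂ) (w : σ ⊕ σ × σ → ℂ) :
    (jacobianAt (reduction F) w).toBlocks₂₂ = 1 := by
  ext p q
  simp [Matrix.toBlocks₂₂, reduction, pderiv_X, Pi.single_apply, Matrix.one_apply, eq_comm]

variable [Fintype σ]

theorem eval_jacDet {ι : Type*} [Fintype ι] [DecidableEq ι] (F : ι → MvPolynomial ι ℂ)
    (z : ι → ℂ) : eval z (jacDet F) = (jacobianAt F z).det :=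
  RingHom.map_det _ _

-- Chain rule applied to `F i = aeval quadVars (lowerDegree (F i))`.
theorem jacobianAt_eq_schur (F : σ → MvPolynomial σ ℂ) (z : σ → ℂ) :
    let M := jacobianAt (reduction F) (quadPoint z)
    jacobianAt F z = M.toBlocks₁₁ - M.toBlocks₁₂ * M.toBlocks₂₁ := by
  ext k i
  simp only [Matrix.map_apply, Matrix.of_apply, Matrix.sub_apply, Matrix.mul_apply,
    Matrix.toBlocks₁₁, Matrix.toBlocks₁₂, Matrix.toBlocks₂₁, eval_pderiv_inl_reduction_inr]
  conv_lhs => rw [← aeval_quadVars_lowerDegree (F i), aeval_eq_bind₁, pderiv_bind₁]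
  simp only [Fintype.sum_sum_type, ← aeval_eq_bind₁, map_add, map_sum, map_mul, eval_aeval_quadVars]
  simp only [quadVars_inl, pderiv_X, Pi.single_apply, apply_ite (eval z), map_one, map_zero,
    mul_ite, mul_one, mul_zero, Finset.sum_ite_eq', Finset.mem_univ, if_true,
    reduction, Sum.elim_inl, neg_mul, Finset.sum_neg_distrib, sub_neg_eq_add]
  simp only [mul_comm]

theorem eval_quadPoint_jacDet_reduction (F : σ → MvPolynomial σ ℂ) (z : σ → ℂ) :
    eval (quadPoint z) (jacDet (reduction F)) = eval z (jacDet F) := by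
  rw [eval_jacDet, eval_jacDet, jacobianAt_eq_schur F z, ← Matrix.det_fromBlocks_one₂₂,
    ← toBlocks₂₂_jacobianAt_reduction F (quadPoint z), Matrix.fromBlocks_toBlocks]

end Jacobian

theorem sumElim_eval_zero_eq_quadPoint {F : σ → MvPolynomial σ ℂ} {z₁ : σ → ℂ}
    {S : σ × σ → MvPolynomial (σ × σ) ℂ}
    (hS : ∀ q, bind₁ (Rsys (reduction F) z₁) (S q) = X q) :
    Sum.elim z₁ (fun q => eval (fun _ => (0 : ℂ)) (S q)) = quadPoint z₁ := by
  refine congrArg (Sum.elim z₁) (funext fun q => ?_)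
  simpa [eval_bind₁, rsys_reduction] using congrArg (eval fun q => z₁ q.1 * z₁ q.2) (hS q)

theorem forall_exists_inverse_rsys_reduction_iff [Fintype σ] [DecidableEq σ]
    (F : σ → MvPolynomial σ ℂ) (c : ℂ) :
    (∀ z₁ : σ → ℂ, ∃ S : σ × σ → MvPolynomial (σ × σ) ℂ,
      (∀ q, bind₁ (Rsys (reduction F) z₁) (S q) = X q) ∧
      (∀ q, bind₁ S (Rsys (reduction F) z₁ q) = X q) ∧
      eval (Sum.elim z₁ fun q => eval (fun _ => (0 : ℂ)) (S q)) (jacDet (reduction F)) = c) ↔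
    ∀ z, eval z (jacDet F) = c := by
  refine forall_congr' fun z₁ => ⟨fun ⟨S, hS, _, hc⟩ => ?_, fun hc => ?_⟩
  · rwa [sumElim_eval_zero_eq_quadPoint hS, eval_quadPoint_jacDet_reduction] at hc
  · have hS (q : σ × σ) :
        bind₁ (Rsys (reduction F) z₁) (X q + C (z₁ q.1 * z₁ q.2)) = X q := by
      simp [rsys_reduction]
    refine ⟨_, hS, fun q => by simp [rsys_reduction], ?_⟩
    rw [sumElim_eval_zero_eq_quadPoint hS, eval_quadPoint_jacDet_reduction, hc]

theorem exists_polynomial_inverse_iff_eval {K : Type*} [CommRing K] [IsDomain K] [Infinite K]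
    (F : σ → MvPolynomial σ K) :
    (∃ G : σ → MvPolynomial σ K, (∀ i, bind₁ F (G i) = X i) ∧ ∀ i, bind₁ G (F i) = X i) ↔
      ∃ G : σ → MvPolynomial σ K, ∀ u : σ → K,
        (∀ i, eval (fun j => eval u (G j)) (F i) = u i) ∧
        ∀ z : σ → K, (∀ i, eval z (F i) = u i) → z = fun j => eval u (G j) := by
  refine exists_congr fun G => ⟨fun ⟨hFG, hGF⟩ u => ⟨fun i => ?_, fun z hz => ?_⟩,
    fun h => ⟨fun i => MvPolynomial.funext fun z => ?_, fun i => MvPolynomial.funext fun u => ?_⟩⟩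
  · simpa [eval_bind₁] using congrArg (eval u) (hGF i)
  · funext j
    simpa [eval_bind₁, hz] using (congrArg (eval z) (hFG j)).symm
  · rw [eval_bind₁, eval_X]
    exact (congrFun ((h fun i => eval z (F i)).2 z fun _ => rfl) i).symm
  · rw [eval_bind₁, eval_X]
    exact (h u).1 i

theorem exists_polynomial_solution_iff_reduction [CommRing R] (F : σ → MvPolynomial σ R) :
    (∃ G : σ → MvPolynomial σ R, ∀ u : σ → R,
        (∀ i, eval (fun j => eval u (G j)) (F i) = u i) ∧
        ∀ z : σ → R, (∀ i, eval z (F i) = u i) → z = fun j => eval u (G j)) ↔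
      ∃ Z : σ ⊕ σ × σ → MvPolynomial σ R, ∀ u : σ → R,
        (∀ v, eval (fun v' => eval u (Z v')) (reduction F v) = Sum.elim u (fun _ => 0) v) ∧
        ∀ w, (∀ v, eval w (reduction F v) = Sum.elim u (fun _ => 0) v) →
          w = fun v => eval u (Z v) := by
  constructor
  · rintro ⟨G, hG⟩
    have hpoint (u : σ → R) :
        (fun v => eval u (bind₁ G (quadVars v))) = quadPoint fun j => eval u (G j) := by
      simp only [eval_bind₁, eval_quadVars]
    refine ⟨fun v => bind₁ G (quadVars v), fun u => ⟨?_, fun w hw => ?_⟩⟩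
    · rw [hpoint, eval_reduction_eq_sumElim_iff]
      exact ⟨_, rfl, (hG u).1⟩
    · obtain ⟨z, rfl, hz⟩ := (eval_reduction_eq_sumElim_iff F w u).1 hw
      rw [hpoint, ← (hG u).2 z hz]
  · rintro ⟨Z, hZ⟩
    refine ⟨fun i => Z (Sum.inl i), fun u => ⟨?_, fun z hz => ?_⟩⟩
    · obtain ⟨z, hz, hFz⟩ := (eval_reduction_eq_sumElim_iff F _ u).1 (hZ u).1
      rwa [show (fun j => eval u (Z (Sum.inl j))) = z from funext fun j => congrFun hz (Sum.inl j)]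
    · have := (hZ u).2 (quadPoint z) ((eval_reduction_eq_sumElim_iff F _ u).2 ⟨z, rfl, hz⟩)
      funext j
      exact congrFun this (Sum.inl j)

section Sets

variable [Fintype σ] [DecidableEq σ] {d : ℕ}

theorem jlinSet_eq_inter_preimage_reduction (hd : 3 ≤ d) :
    JlinSet σ d = PolySys σ d ∩ reduction ⁻¹' JlinParamSet σ (σ × σ) (d - 1) := by
  ext F
  simp only [JlinSet, JlinParamSet, Set.mem_inter_iff, Set.mem_preimage, Set.mem_ofPred_eq,
    forall_exists_inverse_rsys_reduction_iff]
  constructor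
  · rintro ⟨hF, c, hc, hjac⟩
    exact ⟨hF, reduction_mem_polySys hd hF, c, hc, fun z => by simp [hjac]⟩
  · rintro ⟨hF, -, c, hc, hjac⟩
    exact ⟨hF, c, hc, MvPolynomial.funext fun z => by simpa using hjac z⟩

theorem jSet_eq_inter_preimage_reduction (hd : 3 ≤ d) :
    JSet σ d = PolySys σ d ∩ reduction ⁻¹' JParamSet σ (σ × σ) (d - 1) := by
  ext F
  simp only [JSet, JParamSet, Set.mem_inter_iff, Set.mem_preimage, Set.mem_ofPred_eq,
    exists_polynomial_inverse_iff_eval, exists_polynomial_solution_iff_reduction]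
  exact ⟨fun ⟨hF, h⟩ => ⟨hF, reduction_mem_polySys hd hF, h⟩, fun ⟨hF, _, h⟩ => ⟨hF, h⟩⟩

end Sets

end QuadraticReduction

-- `ℂ^{n(n+1)} = ℂ^{n+n²}` is indexed by `Fin n ⊕ Fin n × Fin n`, with first block `Fin n`.
/-- **Reduction theorem (Theorem 4 of the paper)**: for every `n` and `d ≥ 3`
there is an injective map `Φ : 𝒫_{n,d} → 𝒫_{n(n+1),d−1}` (the target space
`ℂ^{n(n+1)} = ℂ^{n+n²}` being indexed by `Fin n ⊕ Fin n × Fin n`, with first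
block `Fin n`) such that `Φ(𝒥^lin_{n,d}) = 𝒥^lin_{n(n+1),d−1;n} ∩ Φ(𝒫_{n,d})`
and `Φ(𝒥_{n,d}) = 𝒥_{n(n+1),d−1;n} ∩ Φ(𝒫_{n,d})`. -/
theorem intermediate_field_reduction (n d : ℕ) (hd : 3 ≤ d) :
    ∃ Φ : (Fin n → MvPolynomial (Fin n) ℂ) →
        ((Fin n ⊕ Fin n × Fin n) → MvPolynomial (Fin n ⊕ Fin n × Fin n) ℂ),
      Set.InjOn Φ (PolySys (Fin n) d) ∧
      Set.MapsTo Φ (PolySys (Fin n) d) (PolySys (Fin n ⊕ Fin n × Fin n) (d - 1)) ∧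
      Φ '' JlinSet (Fin n) d =
        JlinParamSet (Fin n) (Fin n × Fin n) (d - 1) ∩ Φ '' PolySys (Fin n) d ∧
      Φ '' JSet (Fin n) d =
        JParamSet (Fin n) (Fin n × Fin n) (d - 1) ∩ Φ '' PolySys (Fin n) d := by
  open QuadraticReduction in
  refine ⟨reduction, reduction_injective.injOn, fun _ hF => reduction_mem_polySys hd hF, ?_, ?_⟩
  · rw [jlinSet_eq_inter_preimage_reduction hd, Set.image_inter_preimage, Set.inter_comm]
  · rw [jSet_eq_inter_preimage_reduction hd, Set.image_inter_preimage, Set.inter_comm]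
end

section
/- Let d ≥ 3 and let F ∈ 𝒫_{n,d} be a normalized polynomial system with image F̃ = Φ(F) ∈ 𝒫_{n(n+1),d−1} under the intermediate-field map. Then det J_F(z) is a nonzero constant (F ∈ 𝒥^lin_{n,d}) if and only if F̃ ∈ 𝒥^lin_{n(n+1),d−1;n}, where in the parametric definition the first block of n variables is (φ_1,…,φ_n) and the second block of n² variables is (σ_{i,j}). -/
open MvPolynomial

/-- A family of coupling constants `w^{(k)}_{i,j_1…j_k}` is symmetric if each
`w^{(k)}_i` is invariant under permutations of the lower indices `j_1,…,j_k`. -/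
def SymmCoeff (n : ℕ) (w : (k : ℕ) → Fin n → (Fin k → Fin n) → ℂ) : Prop :=
  ∀ (k : ℕ) (i : Fin n) (e : Equiv.Perm (Fin k)) (j : Fin k → Fin n),
    w k i (j ∘ e) = w k i j

/-- The normalized polynomial system
`F_i(z) = z_i − Σ_{k=2}^{d} Σ_{j_1,…,j_k} w^{(k)}_{i,j_1…j_k} z_{j_1}⋯z_{j_k}`. -/
noncomputable def normSys (n d : ℕ)
    (w : (k : ℕ) → Fin n → (Fin k → Fin n) → ℂ) :
    Fin n → MvPolynomial (Fin n) ℂ :=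
  fun i => X i - ∑ k ∈ Finset.Icc 2 d, ∑ j : Fin k → Fin n,
    C (w k i j) * ∏ l, X (j l)

/-- Prepend the index `j` to the index tuple `r = (j_2,…,j_d)`, producing the
tuple `(j, j_2, …, j_d)` of length `d`. -/
def consIdx {n d : ℕ} (j : Fin n) (r : Fin (d - 1) → Fin n) : Fin d → Fin n :=
  fun l =>
    if h : (l : ℕ) = 0 then j
    else r ⟨(l : ℕ) - 1, by have := l.isLt; omega⟩

/-- The intermediate-field map `Φ : F ↦ F̃`, sending the normalized system with
coefficients `w` to the system `F̃ : ℂ^{n+n²} → ℂ^{n+n²}` in the variables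
`(φ_1,…,φ_n, σ_{1,1},…,σ_{n,n})` (indexed by `Fin n ⊕ Fin n × Fin n`) given by
`F̃_i = φ_i − Σ_{k=2}^{d−1} Σ_j w^{(k)}_{i,j} φ_{j_1}⋯φ_{j_k} − Σ_j σ_{i,j} φ_j`
and `F̃_{σ_{i,j}} = σ_{i,j} − Σ_{j_2,…,j_d} w^{(d)}_{i,j,j_2…j_d} φ_{j_2}⋯φ_{j_d}`. -/
noncomputable def intermediateField (n d : ℕ)
    (w : (k : ℕ) → Fin n → (Fin k → Fin n) → ℂ) :
    (Fin n ⊕ Fin n × Fin n) → MvPolynomial (Fin n ⊕ Fin n × Fin n) ℂ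
  | Sum.inl i =>
      X (Sum.inl i)
      - ∑ k ∈ Finset.Icc 2 (d - 1), ∑ j : Fin k → Fin n,
          C (w k i j) * ∏ l, X (Sum.inl (j l))
      - ∑ j : Fin n, X (Sum.inr (i, j)) * X (Sum.inl j)
  | Sum.inr (i, j) =>
      X (Sum.inr (i, j))
      - ∑ r : Fin (d - 1) → Fin n,
          C (w d i (consIdx j r)) * ∏ l, X (Sum.inl (r l))
open MvPolynomial

namespace IFAux

open Finset

lemma eval_bind₁' {σ τ : Type*} (f : τ → ℂ) (g : σ → MvPolynomial τ ℂ)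
    (p : MvPolynomial σ ℂ) :
    eval f (bind₁ g p) = eval (fun i => eval f (g i)) p :=
  eval₂Hom_bind₁ _ _ _ _

lemma pderiv_bind₁ {σ τ : Type*} [Fintype τ] [DecidableEq σ] [DecidableEq τ]
    (h : τ → MvPolynomial σ ℂ) (m : σ) (p : MvPolynomial τ ℂ) :
    pderiv m (bind₁ h p) = ∑ i : τ, bind₁ h (pderiv i p) * pderiv m (h i) := by
  induction p using MvPolynomial.induction_on with
  | C a => simp
  | add p q hp hq => simp [hp, hq, Finset.sum_add_distrib, add_mul]
  | mul_X p i hp =>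
    have key : ∀ j : τ, bind₁ h (pderiv j (p * X i)) * pderiv m (h j)
        = bind₁ h (pderiv j p) * pderiv m (h j) * h i
          + (if j = i then bind₁ h p * pderiv m (h i) else 0) := by
      intro j
      rcases eq_or_ne j i with hij | hij
      · subst hij
        rw [if_pos rfl, pderiv_mul, pderiv_X_self, mul_one, map_add, map_mul, bind₁_X_right]
        ring
      · rw [if_neg hij, pderiv_mul, pderiv_X_of_ne (Ne.symm hij), mul_zero, add_zero,
          map_mul, bind₁_X_right, add_zero]
        ring
    simp only [key, Finset.sum_add_distrib, Finset.sum_ite_eq' Finset.univ i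
      (fun _ => bind₁ h p * pderiv m (h i)), Finset.mem_univ, if_true]
    rw [map_mul, bind₁_X_right, pderiv_mul, hp, Finset.sum_mul]

lemma pderiv_inr_rename_inl {α β : Type*} [DecidableEq α] [DecidableEq β] (p : β)
    (q : MvPolynomial α ℂ) :
    pderiv (Sum.inr p) (rename (Sum.inl : α → α ⊕ β) q) = 0 := by
  induction q using MvPolynomial.induction_on with
  | C a => simp
  | add f g hf hg => simp [hf, hg]
  | mul_X f i hf => simp [pderiv_mul, hf]

noncomputable def sigPoly (n m : ℕ) (w : (k : ℕ) → Fin n → (Fin k → Fin n) → ℂ)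
    (q : Fin n × Fin n) : MvPolynomial (Fin n) ℂ :=
  ∑ r : Fin m → Fin n, C (w (m + 1) q.1 (consIdx (d := m + 1) q.2 r)) * ∏ l, X (r l)

lemma consIdx_zero {n m : ℕ} (j : Fin n) (r : Fin m → Fin n) :
    consIdx (d := m + 1) j r 0 = j := rfl

lemma consIdx_succ {n m : ℕ} (j : Fin n) (r : Fin m → Fin n) (l : Fin m) :
    consIdx (d := m + 1) j r l.succ = r l := by
  simp only [consIdx, Fin.val_succ]
  rw [dif_neg (Nat.succ_ne_zero _)]
  congr 1

def consEquiv (n m : ℕ) : (Fin n × (Fin m → Fin n)) ≃ (Fin (m + 1) → Fin n) where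
  toFun p := consIdx (d := m + 1) p.1 p.2
  invFun t := (t 0, fun l => t l.succ)
  left_inv p := by
    obtain ⟨j, r⟩ := p
    refine Prod.ext (consIdx_zero j r) (funext fun l => consIdx_succ j r l)
  right_inv t := by
    funext l
    rcases Fin.eq_zero_or_eq_succ l with rfl | ⟨l', rfl⟩
    · exact consIdx_zero _ _
    · exact consIdx_succ _ _ l'

lemma prod_consIdx {n m : ℕ} (j : Fin n) (r : Fin m → Fin n) :
    (∏ l, X (consIdx (d := m + 1) j r l) : MvPolynomial (Fin n) ℂ)
      = X j * ∏ l, X (r l) := by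
  rw [Fin.prod_univ_succ]
  simp [consIdx_zero, consIdx_succ]

lemma sum_top (n m : ℕ) (w : (k : ℕ) → Fin n → (Fin k → Fin n) → ℂ) (i : Fin n) :
    (∑ t : Fin (m + 1) → Fin n, C (w (m + 1) i t) * ∏ l, X (t l) : MvPolynomial (Fin n) ℂ)
      = ∑ j : Fin n, sigPoly n m w (i, j) * X j := by
  rw [← Equiv.sum_comp (consEquiv n m) (fun t => C (w (m + 1) i t) * ∏ l, X (t l)),
    Fintype.sum_prod_type]
  unfold sigPoly
  simp only [Finset.sum_mul]
  refine Finset.sum_congr rfl fun j _ => Finset.sum_congr rfl fun r _ => ?_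
  show C (w (m + 1) i (consIdx (d := m + 1) j r)) * ∏ l, X (consIdx (d := m + 1) j r l) = _
  rw [prod_consIdx]
  ring

lemma bind_inter_inr (n m : ℕ) (w : (k : ℕ) → Fin n → (Fin k → Fin n) → ℂ)
    (q : Fin n × Fin n) :
    bind₁ (Sum.elim X (sigPoly n m w)) (intermediateField n (m + 1) w (Sum.inr q)) = 0 := by
  obtain ⟨i, j⟩ := q
  simp only [intermediateField, map_sub, map_sum, map_mul, map_prod, bind₁_X_right,
    Sum.elim_inr, Sum.elim_inl, bind₁_C_right]
  rw [sub_eq_zero]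
  rfl

lemma bind_inter_inl (n m : ℕ) (hm : 2 ≤ m) (w : (k : ℕ) → Fin n → (Fin k → Fin n) → ℂ)
    (i : Fin n) :
    bind₁ (Sum.elim X (sigPoly n m w)) (intermediateField n (m + 1) w (Sum.inl i))
      = normSys n (m + 1) w i := by
  simp only [intermediateField, normSys, map_sub, map_sum, map_mul, map_prod, bind₁_X_right,
    Sum.elim_inr, Sum.elim_inl, bind₁_C_right]
  rw [Finset.sum_Icc_succ_top (by omega : 2 ≤ m + 1), sum_top n m w i]
  rw [sub_sub]
  norm_num

lemma pderiv_inr_inter_inl (n m : ℕ) (w : (k : ℕ) → Fin n → (Fin k → Fin n) → ℂ)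
    (p : Fin n × Fin n) (b : Fin n) :
    pderiv (Sum.inr p) (intermediateField n (m + 1) w (Sum.inl b))
      = -(if p.1 = b then X (Sum.inl p.2) else 0) := by
  obtain ⟨p1, p2⟩ := p
  simp only [intermediateField, map_sub]
  rw [pderiv_X_of_ne (by simp)]
  have h1 : pderiv (Sum.inr (p1, p2)) (∑ k ∈ Finset.Icc 2 (m + 1 - 1), ∑ j : Fin k → Fin n,
      C (w k b j) * ∏ l, X (Sum.inl (j l)) : MvPolynomial (Fin n ⊕ Fin n × Fin n) ℂ) = 0 := by
    rw [map_sum]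
    refine Finset.sum_eq_zero fun k _ => ?_
    rw [map_sum]
    refine Finset.sum_eq_zero fun j _ => ?_
    rw [pderiv_C_mul]
    have hre : (∏ l, X (Sum.inl (j l)) : MvPolynomial (Fin n ⊕ Fin n × Fin n) ℂ)
        = rename Sum.inl (∏ l, X (j l)) := by simp
    rw [hre, pderiv_inr_rename_inl, mul_zero]
  rw [h1, sub_zero, zero_sub, map_sum]
  have h2 : ∀ j : Fin n, pderiv (Sum.inr (p1, p2)) (X (Sum.inr (b, j)) * X (Sum.inl j)
      : MvPolynomial (Fin n ⊕ Fin n × Fin n) ℂ)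
      = if p1 = b ∧ j = p2 then X (Sum.inl j) else 0 := by
    intro j
    have hz : pderiv (Sum.inr (p1, p2)) (X (Sum.inl j)
        : MvPolynomial (Fin n ⊕ Fin n × Fin n) ℂ) = 0 := pderiv_X_of_ne (by simp)
    rw [pderiv_mul, hz, mul_zero, add_zero, pderiv_X, Pi.single_apply]
    by_cases hc : p1 = b ∧ j = p2
    · obtain ⟨hb, hj⟩ := hc
      subst hb; subst hj
      simp
    · rw [if_neg (by
        simp only [Sum.inr.injEq, Prod.mk.injEq, not_and]
        intro hh1 hh2
        exact (hc ⟨hh1.symm, hh2⟩).elim), zero_mul, if_neg hc]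
  simp only [h2]
  congr 1
  by_cases hb : p1 = b
  · simp only [hb, true_and]
    rw [Finset.sum_ite_eq' Finset.univ p2 (fun j => (X (Sum.inl j)
      : MvPolynomial (Fin n ⊕ Fin n × Fin n) ℂ))]
    simp
  · simp [hb]

lemma pderiv_inr_inter_inr (n m : ℕ) (w : (k : ℕ) → Fin n → (Fin k → Fin n) → ℂ)
    (p q : Fin n × Fin n) :
    pderiv (Sum.inr p) (intermediateField n (m + 1) w (Sum.inr q))
      = if p = q then 1 else 0 := by
  obtain ⟨q1, q2⟩ := q
  simp only [intermediateField, map_sub]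
  have h1 : pderiv (Sum.inr p) (∑ r : Fin (m + 1 - 1) → Fin n,
      C (w (m + 1) q1 (consIdx q2 r)) * ∏ l, X (Sum.inl (r l))
      : MvPolynomial (Fin n ⊕ Fin n × Fin n) ℂ) = 0 := by
    rw [map_sum]
    refine Finset.sum_eq_zero fun r _ => ?_
    rw [pderiv_C_mul]
    have hre : (∏ l, X (Sum.inl (r l)) : MvPolynomial (Fin n ⊕ Fin n × Fin n) ℂ)
        = rename Sum.inl (∏ l, X (r l)) := by simp
    rw [hre, pderiv_inr_rename_inl, mul_zero]
  rw [h1, sub_zero, pderiv_X, Pi.single_apply]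
  rcases eq_or_ne p (q1, q2) with hp | hp
  · subst hp; simp
  · rw [if_neg (by
      simp only [Sum.inr.injEq]
      exact fun hh => hp hh.symm), if_neg hp]

lemma Rsys_inter (n m : ℕ) (w : (k : ℕ) → Fin n → (Fin k → Fin n) → ℂ)
    (z1 : Fin n → ℂ) (q : Fin n × Fin n) :
    Rsys (intermediateField n (m + 1) w) z1 q
      = X q - C (eval z1 (sigPoly n m w q)) := by
  obtain ⟨i, j⟩ := q
  simp only [Rsys, intermediateField, map_sub, aeval_X, Sum.elim_inr, Sum.elim_inl, map_sum,
    map_mul, map_prod, aeval_C, sigPoly]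
  congr 1
  simp only [map_sum, map_mul, eval_C, map_prod, eval_X, MvPolynomial.algebraMap_eq]
  rfl

lemma totalDegree_prod_X_le {σ : Type*} {k : ℕ} (j : Fin k → σ) :
    (∏ l, X (j l) : MvPolynomial σ ℂ).totalDegree ≤ k := by
  refine (totalDegree_finset_prod _ _).trans ?_
  simp [totalDegree_X]

lemma normSys_mem (n d : ℕ) (hd : 1 ≤ d) (w : (k : ℕ) → Fin n → (Fin k → Fin n) → ℂ) :
    normSys n d w ∈ PolySys (Fin n) d := by
  intro i
  refine (totalDegree_sub _ _).trans (max_le ?_ ?_)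
  · simpa [totalDegree_X] using hd
  · refine (totalDegree_finset_sum _ _).trans (Finset.sup_le fun k hk => ?_)
    refine (totalDegree_finset_sum _ _).trans (Finset.sup_le fun j _ => ?_)
    refine (totalDegree_mul _ _).trans ?_
    have h1 := totalDegree_prod_X_le (σ := Fin n) j
    have hk' := (Finset.mem_Icc.mp hk).2
    simp only [totalDegree_C, zero_add]
    omega

lemma inter_mem (n m : ℕ) (hm : 2 ≤ m) (w : (k : ℕ) → Fin n → (Fin k → Fin n) → ℂ) :
    intermediateField n (m + 1) w ∈ PolySys (Fin n ⊕ Fin n × Fin n) m := by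
  intro t
  have hXd : ∀ s : Fin n ⊕ Fin n × Fin n,
      (X s : MvPolynomial (Fin n ⊕ Fin n × Fin n) ℂ).totalDegree ≤ m := by
    intro s; rw [totalDegree_X]; omega
  match t with
  | Sum.inl i =>
    refine (totalDegree_sub _ _).trans (max_le ((totalDegree_sub _ _).trans
      (max_le (hXd _) ?_)) ?_)
    · refine (totalDegree_finset_sum _ _).trans (Finset.sup_le fun k hk => ?_)
      refine (totalDegree_finset_sum _ _).trans (Finset.sup_le fun j _ => ?_)
      refine (totalDegree_mul _ _).trans ?_
      have h1 := totalDegree_prod_X_le (σ := Fin n ⊕ Fin n × Fin n) (fun l => Sum.inl (j l))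
      have hk' := (Finset.mem_Icc.mp hk).2
      simp only [totalDegree_C, zero_add]
      omega
    · refine (totalDegree_finset_sum _ _).trans (Finset.sup_le fun j _ => ?_)
      refine (totalDegree_mul _ _).trans ?_
      rw [totalDegree_X, totalDegree_X]
      omega
  | Sum.inr q =>
    refine (totalDegree_sub _ _).trans (max_le (hXd _) ?_)
    refine (totalDegree_finset_sum _ _).trans (Finset.sup_le fun r _ => ?_)
    refine (totalDegree_mul _ _).trans ?_
    have h1 := totalDegree_prod_X_le (σ := Fin n ⊕ Fin n × Fin n) (fun l => Sum.inl (r l))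
    simp only [totalDegree_C, zero_add]
    have : m + 1 - 1 = m := rfl
    omega

lemma eval_jacDet_inter (n m : ℕ) (hm : 2 ≤ m) (w : (k : ℕ) → Fin n → (Fin k → Fin n) → ℂ)
    (z1 : Fin n → ℂ) :
    eval (Sum.elim z1 fun q => eval z1 (sigPoly n m w q))
        (jacDet (intermediateField n (m + 1) w))
      = eval z1 (jacDet (normSys n (m + 1) w)) := by
  classical
  set h : (Fin n ⊕ Fin n × Fin n) → MvPolynomial (Fin n) ℂ := Sum.elim X (sigPoly n m w) with hh
  set pt : (Fin n ⊕ Fin n × Fin n) → ℂ := Sum.elim z1 fun q => eval z1 (sigPoly n m w q) with hpt_def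
  have hpt : ∀ p : MvPolynomial (Fin n ⊕ Fin n × Fin n) ℂ, eval pt p = eval z1 (bind₁ h p) := by
    intro p
    have hfun : (fun t => eval z1 (h t)) = pt := by
      funext t
      cases t with
      | inl j => simp [hh, hpt_def]
      | inr q => simp [hh, hpt_def]
    rw [eval_bind₁', hfun]
  set A : Matrix (Fin n) (Fin n) ℂ :=
    Matrix.of fun a b => eval pt (pderiv (Sum.inl a) (intermediateField n (m + 1) w (Sum.inl b)))
    with hA_def
  set B : Matrix (Fin n) (Fin n × Fin n) ℂ :=
    Matrix.of fun a q => eval pt (pderiv (Sum.inl a) (intermediateField n (m + 1) w (Sum.inr q)))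
    with hB_def
  set Cm : Matrix (Fin n × Fin n) (Fin n) ℂ :=
    Matrix.of fun p b => eval pt (pderiv (Sum.inr p) (intermediateField n (m + 1) w (Sum.inl b)))
    with hC_def
  set D : Matrix (Fin n) (Fin n × Fin n) ℂ :=
    Matrix.of fun a q => eval z1 (pderiv a (sigPoly n m w q)) with hD_def
  have hL : eval pt (jacDet (intermediateField n (m + 1) w))
      = Matrix.det (Matrix.fromBlocks A B Cm 1) := by
    rw [jacDet, RingHom.map_det]
    congr 1
    ext t s
    cases t with
    | inl a =>
      cases s with
      | inl b => rfl
      | inr q => rfl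
    | inr p =>
      cases s with
      | inl b => rfl
      | inr q =>
        show eval pt (pderiv (Sum.inr p) (intermediateField n (m + 1) w (Sum.inr q)))
          = (1 : Matrix (Fin n × Fin n) (Fin n × Fin n) ℂ) p q
        rw [pderiv_inr_inter_inr, Matrix.one_apply]
        split_ifs <;> simp
  have chain : ∀ (a : Fin n) (t : Fin n ⊕ Fin n × Fin n),
      eval z1 (pderiv a (bind₁ h (intermediateField n (m + 1) w t)))
        = eval pt (pderiv (Sum.inl a) (intermediateField n (m + 1) w t))
          + ∑ q : Fin n × Fin n,
              D a q * eval pt (pderiv (Sum.inr q) (intermediateField n (m + 1) w t)) := by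
    intro a t
    rw [pderiv_bind₁, map_sum, Fintype.sum_sum_type]
    congr 1
    · have term1 : ∀ j : Fin n,
          eval z1 (bind₁ h (pderiv (Sum.inl j) (intermediateField n (m + 1) w t))
            * pderiv a (h (Sum.inl j)))
          = if j = a then eval pt (pderiv (Sum.inl j) (intermediateField n (m + 1) w t))
            else 0 := by
        intro j
        have hXj : h (Sum.inl j) = X j := rfl
        rw [hXj, pderiv_X, Pi.single_apply, map_mul, ← hpt]
        split_ifs <;> simp
      rw [Finset.sum_congr rfl fun j _ => term1 j,
        Finset.sum_ite_eq' Finset.univ a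
          (fun j => eval pt (pderiv (Sum.inl j) (intermediateField n (m + 1) w t))),
        if_pos (Finset.mem_univ a)]
    · refine Finset.sum_congr rfl fun q _ => ?_
      rw [map_mul, ← hpt]
      have hq : h (Sum.inr q) = sigPoly n m w q := rfl
      rw [hq, mul_comm]
      rfl
  have hB : ∀ (a : Fin n) (q' : Fin n × Fin n), B a q' = -D a q' := by
    intro a q'
    have h0 := chain a (Sum.inr q')
    rw [bind_inter_inr, map_zero, map_zero] at h0
    have hsum : ∀ q : Fin n × Fin n,
        D a q * eval pt (pderiv (Sum.inr q) (intermediateField n (m + 1) w (Sum.inr q')))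
          = if q = q' then D a q else 0 := by
      intro q
      rw [pderiv_inr_inter_inr]
      split_ifs <;> simp
    rw [Finset.sum_congr rfl fun q _ => hsum q,
      Finset.sum_ite_eq' Finset.univ q' (fun q => D a q), if_pos (Finset.mem_univ q')] at h0
    have : B a q' = eval pt (pderiv (Sum.inl a)
        (intermediateField n (m + 1) w (Sum.inr q'))) := rfl
    rw [this]
    exact eq_neg_of_add_eq_zero_left h0.symm
  have hA : ∀ a b : Fin n, eval z1 (pderiv a (normSys n (m + 1) w b))
      = A a b + ∑ q : Fin n × Fin n, D a q * Cm q b := by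
    intro a b
    rw [← bind_inter_inl n m hm w b]
    exact chain a (Sum.inl b)
  rw [hL, Matrix.det_fromBlocks_one₂₂]
  have hABC : A - B * Cm
      = Matrix.of fun a b => eval z1 (pderiv a (normSys n (m + 1) w b)) := by
    ext a b
    rw [Matrix.sub_apply, Matrix.mul_apply]
    show A a b - ∑ q : Fin n × Fin n, B a q * Cm q b = eval z1 (pderiv a (normSys n (m + 1) w b))
    rw [hA a b]
    rw [Finset.sum_congr rfl fun q _ => by rw [hB a q]]
    simp [Finset.sum_neg_distrib, neg_mul]
  rw [hABC, jacDet, RingHom.map_det]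
  rfl

end IFAux

/-- For `d ≥ 3` and a normalized system `F ∈ 𝒫_{n,d}` with symmetric
coefficients `w` and image `F̃ = Φ(F)` under the intermediate-field map:
`det J_F` is a nonzero constant (`F ∈ 𝒥^lin_{n,d}`) iff
`F̃ ∈ 𝒥^lin_{n(n+1),d−1;n}`, where the first block of `n` variables is
`(φ_1,…,φ_n)` and the second block of `n²` variables is `(σ_{i,j})`. -/
theorem intermediateField_jlin_iff (n d : ℕ) (hd : 3 ≤ d)
    (w : (k : ℕ) → Fin n → (Fin k → Fin n) → ℂ) (hw : SymmCoeff n w) :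
    normSys n d w ∈ JlinSet (Fin n) d ↔
      intermediateField n d w ∈ JlinParamSet (Fin n) (Fin n × Fin n) (d - 1) := by
  obtain ⟨m, rfl⟩ : ∃ m, d = m + 1 := ⟨d - 1, by omega⟩
  have hm : 2 ≤ m := by omega
  constructor
  · rintro ⟨-, c, hc, hjac⟩
    refine ⟨IFAux.inter_mem n m hm w, c, hc, fun z1 => ?_⟩
    refine ⟨fun q => X q + C (eval z1 (IFAux.sigPoly n m w q)), fun q => ?_, fun q => ?_, ?_⟩
    · rw [map_add, bind₁_X_right, bind₁_C_right, IFAux.Rsys_inter n m w z1 q]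
      ring
    · rw [IFAux.Rsys_inter n m w z1 q, map_sub, bind₁_X_right, bind₁_C_right]
      ring
    · have hpt : (Sum.elim z1 fun q => eval (fun _ : Fin n × Fin n => (0 : ℂ))
          ((fun q => X q + C (eval z1 (IFAux.sigPoly n m w q))) q))
          = Sum.elim z1 fun q => eval z1 (IFAux.sigPoly n m w q) := by
        funext t
        cases t with
        | inl a => rfl
        | inr q => simp
      rw [hpt, IFAux.eval_jacDet_inter n m hm w z1, hjac, eval_C]
  · rintro ⟨-, c, hc, hS⟩
    refine ⟨IFAux.normSys_mem n (m + 1) (by omega) w, c, hc, ?_⟩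
    have key : ∀ z1 : Fin n → ℂ, eval z1 (jacDet (normSys n (m + 1) w)) = eval z1 (C c) := by
      intro z1
      obtain ⟨S, hS1, hS2, hSc⟩ := hS z1
      have hSq : ∀ q, S q = X q + C (eval z1 (IFAux.sigPoly n m w q)) := by
        intro q
        have h2 := hS2 q
        rw [IFAux.Rsys_inter n m w z1 q, map_sub, bind₁_X_right, bind₁_C_right,
          sub_eq_iff_eq_add] at h2
        exact h2
      have hpt2 : (Sum.elim z1 fun q => eval (fun _ : Fin n × Fin n => (0 : ℂ)) (S q))
          = Sum.elim z1 fun q => eval z1 (IFAux.sigPoly n m w q) := by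
        funext t
        cases t with
        | inl a => rfl
        | inr q => simp [hSq q]
      rw [hpt2, IFAux.eval_jacDet_inter n m hm w z1] at hSc
      rw [hSc, eval_C]
    exact MvPolynomial.funext key
end

section
/- Let d ≥ 3 and let F ∈ 𝒫_{n,d} be a normalized polynomial system with image F̃ = Φ(F) ∈ 𝒫_{n(n+1),d−1} under the intermediate-field map. Then F is invertible with polynomial inverse (F ∈ 𝒥_{n,d}) if and only if F̃ ∈ 𝒥_{n(n+1),d−1;n}, where in the parametric definition the first block of n variables is (φ_1,…,φ_n) and the second block of n² variables is (σ_{i,j}). -/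
open MvPolynomial

open MvPolynomial

lemma consIdx_eq_cons {n m : ℕ} (j : Fin n) (r : Fin m → Fin n) :
    consIdx (d := m + 1) j r = Fin.cons j r := by
  funext l
  induction l using Fin.cases with
  | zero => simp [consIdx]
  | succ i => simp [consIdx, Fin.cons_succ]

lemma sum_consIdx {n m : ℕ} (c : (Fin (m + 1) → Fin n) → ℂ) (φ : Fin n → ℂ) :
    ∑ j : Fin (m + 1) → Fin n, c j * ∏ l, φ (j l)
      = ∑ j : Fin n, (∑ r : Fin m → Fin n, c (consIdx (d := m+1) j r) * ∏ l, φ (r l)) * φ j := by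
  rw [← (Fin.consEquiv (fun _ : Fin (m+1) => Fin n)).sum_comp
    (fun j => c j * ∏ l, φ (j l))]
  rw [Fintype.sum_prod_type]
  refine Finset.sum_congr rfl fun j _ => ?_
  rw [Finset.sum_mul]
  refine Finset.sum_congr rfl fun r _ => ?_
  simp [Fin.consEquiv, consIdx_eq_cons, Fin.prod_univ_succ, Fin.cons_succ]
  ring

noncomputable def sigmaPoly (n m : ℕ)
    (w : (k : ℕ) → Fin n → (Fin k → Fin n) → ℂ) (i j : Fin n) :
    MvPolynomial (Fin n) ℂ :=
  ∑ r : Fin (m + 2) → Fin n, C (w (m + 3) i (consIdx (d := m + 3) j r)) * ∏ l, X (r l)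

lemma eval_IF_inr {n m : ℕ} (w : (k : ℕ) → Fin n → (Fin k → Fin n) → ℂ)
    (z : (Fin n ⊕ Fin n × Fin n) → ℂ) (i j : Fin n) :
    eval z (intermediateField n (m + 3) w (Sum.inr (i, j)))
      = z (Sum.inr (i, j)) - eval (z ∘ Sum.inl) (sigmaPoly n m w i j) := by
  simp [intermediateField, sigmaPoly, Function.comp]

lemma eval_IF_inl {n m : ℕ} (w : (k : ℕ) → Fin n → (Fin k → Fin n) → ℂ)
    (z : (Fin n ⊕ Fin n × Fin n) → ℂ) (i : Fin n) :
    eval z (intermediateField n (m + 3) w (Sum.inl i))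
      = eval (z ∘ Sum.inl) (normSys n (m + 3) w i)
        + ∑ j : Fin n, (eval (z ∘ Sum.inl) (sigmaPoly n m w i j) - z (Sum.inr (i, j)))
            * z (Sum.inl j) := by
  have key := sum_consIdx (m := m + 2)
    (fun j => w (m + 3) i j) (fun j => z (Sum.inl j))
  have hb : Finset.Icc 2 (m + 3 - 1) = Finset.Icc 2 (m + 2) := rfl
  simp only [intermediateField, normSys, sigmaPoly, hb, map_sub, map_sum, map_mul,
    map_prod, eval_C, eval_X, Function.comp]
  rw [Finset.sum_Icc_succ_top (show 2 ≤ m + 3 by omega), key]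
  simp only [sub_mul, Finset.sum_sub_distrib]
  ring

lemma sol_iff {n m : ℕ} (w : (k : ℕ) → Fin n → (Fin k → Fin n) → ℂ)
    (z : (Fin n ⊕ Fin n × Fin n) → ℂ) (u : Fin n → ℂ) :
    (∀ i, eval z (intermediateField n (m + 3) w i) = Sum.elim u (fun _ => 0) i) ↔
      ((∀ i, eval (z ∘ Sum.inl) (normSys n (m + 3) w i) = u i) ∧
        ∀ p : Fin n × Fin n,
          z (Sum.inr p) = eval (z ∘ Sum.inl) (sigmaPoly n m w p.1 p.2)) := by
  constructor
  · intro h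
    have hσ : ∀ p : Fin n × Fin n,
        z (Sum.inr p) = eval (z ∘ Sum.inl) (sigmaPoly n m w p.1 p.2) := by
      intro ⟨i, j⟩
      have := h (Sum.inr (i, j))
      rw [eval_IF_inr] at this
      simpa [sub_eq_zero] using this
    refine ⟨fun i => ?_, hσ⟩
    have := h (Sum.inl i)
    rw [eval_IF_inl] at this
    simp only [Sum.elim_inl] at this
    calc eval (z ∘ Sum.inl) (normSys n (m + 3) w i)
        = eval (z ∘ Sum.inl) (normSys n (m + 3) w i)
          + ∑ j : Fin n, (eval (z ∘ Sum.inl) (sigmaPoly n m w i j) - z (Sum.inr (i, j)))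
              * z (Sum.inl j) := by
          rw [Finset.sum_eq_zero (fun j _ => by rw [hσ (i, j)]; ring), add_zero]
      _ = u i := this
  · rintro ⟨hF, hσ⟩ (i | ⟨i, j⟩)
    · rw [eval_IF_inl, Sum.elim_inl, ← hF i]
      rw [Finset.sum_eq_zero (fun j _ => by rw [hσ (i, j)]; ring), add_zero]
    · rw [eval_IF_inr, Sum.elim_inr, hσ (i, j), sub_self]

lemma deg_monomial {σ : Type*} [Fintype σ] [DecidableEq σ] {k : ℕ} (c : ℂ)
    (j : Fin k → σ) :
    (C c * ∏ l, (X (j l) : MvPolynomial σ ℂ)).totalDegree ≤ k := by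
  refine (totalDegree_mul _ _).trans ?_
  simp only [totalDegree_C, zero_add]
  refine (totalDegree_finset_prod _ _).trans ?_
  calc ∑ l : Fin k, (X (j l) : MvPolynomial σ ℂ).totalDegree
      ≤ ∑ _l : Fin k, 1 := Finset.sum_le_sum fun l _ => (totalDegree_X _).le
    _ = k := by simp

lemma deg_normSys (n d : ℕ) (hd : 1 ≤ d)
    (w : (k : ℕ) → Fin n → (Fin k → Fin n) → ℂ) (i : Fin n) :
    (normSys n d w i).totalDegree ≤ d := by
  refine (totalDegree_sub _ _).trans (max_le ((totalDegree_X _).le.trans hd) ?_)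
  refine totalDegree_finsetSum_le fun k hk => totalDegree_finsetSum_le fun j _ => ?_
  exact (deg_monomial _ _).trans (Finset.mem_Icc.mp hk).2

lemma deg_IF (n m : ℕ) (w : (k : ℕ) → Fin n → (Fin k → Fin n) → ℂ)
    (i : Fin n ⊕ Fin n × Fin n) :
    (intermediateField n (m + 3) w i).totalDegree ≤ m + 2 := by
  obtain (i | ⟨i, j⟩) := i
  · refine (totalDegree_sub _ _).trans (max_le ((totalDegree_sub _ _).trans
      (max_le ((totalDegree_X _).le.trans (by omega)) ?_)) ?_)
    · refine totalDegree_finsetSum_le fun k hk => totalDegree_finsetSum_le fun j _ => ?_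
      refine (deg_monomial _ _).trans ?_
      have := (Finset.mem_Icc.mp hk).2
      omega
    · refine totalDegree_finsetSum_le fun j _ => ?_
      refine (totalDegree_mul _ _).trans ?_
      have h1 := totalDegree_X (R := ℂ) (Sum.inr (i, j) : Fin n ⊕ Fin n × Fin n)
      have h2 := totalDegree_X (R := ℂ) (Sum.inl j : Fin n ⊕ Fin n × Fin n)
      omega
  · refine (totalDegree_sub _ _).trans
      (max_le ((totalDegree_X _).le.trans (by omega)) ?_)
    refine totalDegree_finsetSum_le fun r _ => ?_
    exact (deg_monomial _ _).trans (by rfl)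

lemma eval_bind₁' {σ τ : Type*} (x : τ → ℂ) (g : σ → MvPolynomial τ ℂ)
    (p : MvPolynomial σ ℂ) :
    eval x (bind₁ g p) = eval (fun i => eval x (g i)) p := by
  simpa using eval₂Hom_bind₁ (RingHom.id ℂ) x g p

/-- For `d ≥ 3` and a normalized system `F ∈ 𝒫_{n,d}` with symmetric
coefficients `w` and image `F̃ = Φ(F)` under the intermediate-field map:
`F` is invertible with polynomial inverse (`F ∈ 𝒥_{n,d}`) iff
`F̃ ∈ 𝒥_{n(n+1),d−1;n}`, where the first block of `n` variables is
`(φ_1,…,φ_n)` and the second block of `n²` variables is `(σ_{i,j})`. -/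
theorem intermediateField_jinv_iff (n d : ℕ) (hd : 3 ≤ d)
    (w : (k : ℕ) → Fin n → (Fin k → Fin n) → ℂ) (hw : SymmCoeff n w) :
    normSys n d w ∈ JSet (Fin n) d ↔
      intermediateField n d w ∈ JParamSet (Fin n) (Fin n × Fin n) (d - 1) := by
  obtain ⟨m, rfl⟩ : ∃ m, d = m + 3 := ⟨d - 3, by omega⟩
  constructor
  · rintro ⟨hdegF, G, hFG, hGF⟩
    refine ⟨fun i => deg_IF n m w i, ?_⟩
    refine ⟨Sum.elim G (fun p => bind₁ G (sigmaPoly n m w p.1 p.2)), fun u => ?_⟩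
    constructor
    · intro i
      refine (sol_iff w _ u).mpr ⟨fun i => ?_, fun p => ?_⟩ i
      · have : eval u (bind₁ G (normSys n (m + 3) w i)) = u i := by
          rw [hGF i, eval_X]
        rw [eval_bind₁'] at this
        exact this
      · obtain ⟨i, j⟩ := p
        simp only [Function.comp, Sum.elim_inl, Sum.elim_inr]
        rw [eval_bind₁']
        rfl
    · intro z hz
      obtain ⟨hF', hσ'⟩ := (sol_iff w z u).mp hz
      have hinl : ∀ i, z (Sum.inl i) = eval u (G i) := by
        intro i
        have h1 := congrArg (eval (z ∘ Sum.inl)) (hFG i)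
        rw [eval_bind₁', eval_X] at h1
        have h2 : (fun j => eval (z ∘ Sum.inl) (normSys n (m + 3) w j)) = u :=
          funext hF'
        rw [h2] at h1
        exact h1.symm
      have hcmp : z ∘ Sum.inl = fun i => eval u (G i) := funext hinl
      funext i'
      obtain (i | ⟨i, j⟩) := i'
      · exact hinl i
      · have := hσ' (i, j)
        rw [hcmp] at this
        rw [this, Sum.elim_inr, eval_bind₁']
  · rintro ⟨hdegIF, Z, hZ⟩
    refine ⟨fun i => deg_normSys n (m + 3) (by omega) w i,
      fun i => Z (Sum.inl i), fun i => ?_, fun i => ?_⟩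
    · apply MvPolynomial.funext
      intro φ
      set u : Fin n → ℂ := fun j => eval φ (normSys n (m + 3) w j) with hu
      set z : (Fin n ⊕ Fin n × Fin n) → ℂ :=
        Sum.elim φ (fun p => eval φ (sigmaPoly n m w p.1 p.2)) with hzdef
      have hsol : ∀ i', eval z (intermediateField n (m + 3) w i')
          = Sum.elim u (fun _ => 0) i' :=
        (sol_iff w z u).mpr ⟨fun i => rfl, fun p => rfl⟩
      have huniq := (hZ u).2 z hsol
      have := congrFun huniq (Sum.inl i)
      rw [eval_bind₁', eval_X]
      exact this.symm
    · apply MvPolynomial.funext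
      intro u
      have hsol := (hZ u).1
      have := ((sol_iff w (fun i' => eval u (Z i')) u).mp hsol).1 i
      rw [eval_bind₁', eval_X]
      exact this
end
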